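/- The Parshin symbol of monomials is multiplicative in each argument: fix n ≥ 1, c₂, …, c_{n+1} ∈ ℂ* and k₂, …, k_{n+1} ∈ ℤ^n. If c₁ = a·b with a, b ∈ ℂ* and k₁ = l + m with l, m ∈ ℤ^n, then [c₁ z^{k₁}, c₂ z^{k₂}, …, c_{n+1} z^{k_{n+1}}] = [a z^{l}, c₂ z^{k₂}, …, c_{n+1} z^{k_{n+1}}] · [b z^{m}, c₂ z^{k₂}, …, c_{n+1} z^{k_{n+1}}]. -/

import Mathlib

/-- For `i < j` in `{0, …, n}`, the `t`-th element (in increasing order) of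
`{0, …, n} \ {i, j}`. -/
def omitTwo {n : ℕ} (i j : Fin (n + 1)) (t : Fin (n - 1)) : Fin (n + 1) :=
  if (t : ℕ) < (i : ℕ) then ⟨t, by omega⟩
  else if (t : ℕ) + 1 < (j : ℕ) then ⟨(t : ℕ) + 1, by have := t.isLt; omega⟩
  else ⟨(t : ℕ) + 2, by have := t.isLt; omega⟩

/-- `Δ_{ij}`: the determinant over `𝔽₂` of the `n × n` matrix whose first `n - 1` columns are
`w₁, …, w_{n+1}` with `w_i`, `w_j` omitted (in increasing order of index) and whose last
column is the coordinatewise product of `w_i` and `w_j`. -/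
def DeltaIJ (n : ℕ) (w : Fin (n + 1) → Fin n → ZMod 2) (i j : Fin (n + 1)) : ZMod 2 :=
  Matrix.det (Matrix.of fun r c : Fin n =>
    if h : (c : ℕ) < n - 1 then w (omitTwo i j ⟨c, h⟩) r else w i r * w j r)

/-- `D(w₁, …, w_{n+1}) = ∑_{i < j} Δ_{ij}`. -/
def D₂ (n : ℕ) (w : Fin (n + 1) → Fin n → ZMod 2) : ZMod 2 :=
  ∑ p ∈ Finset.univ.filter (fun p : Fin (n + 1) × Fin (n + 1) => p.1 < p.2),
    DeltaIJ n w p.1 p.2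

/-- The Parshin symbol `[c₁ z^{k₁}, …, c_{n+1} z^{k_{n+1}}]` of `n + 1` monomials in `n`
variables: `(-1)^{D(k̄₁, …, k̄_{n+1})} ∏ᵢ cᵢ^{(-1)ⁱ det(k₁, …, k̂ᵢ, …, k_{n+1})}`, where `k̄`
denotes mod-2 reduction (indices `i` are 1-based, so the 0-based index `i : Fin (n+1)`
contributes the sign `(-1)^{i+1}`). -/
noncomputable def parshinSymbol (n : ℕ) (c : Fin (n + 1) → ℂ)
    (k : Fin (n + 1) → Fin n → ℤ) : ℂ :=
  (if D₂ n (fun t r => ((k t r : ℤ) : ZMod 2)) = 0 then (1 : ℂ) else -1) *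
    ∏ i : Fin (n + 1),
      c i ^ ((-1 : ℤ) ^ ((i : ℕ) + 1) *
        Matrix.det (Matrix.of fun r c' : Fin n => k (i.succAbove c') r))

/-! Every ingredient of the symbol is additive in `k₁` or multiplicative in `c₁`. For `i ≥ 2` the
exponent `det(k₁, …, k̂ᵢ, …)` is linear in the column `k₁`, so `cᵢ` (nonzero) splits by `zpow_add₀`;
for `i = 1` the exponent does not involve `k₁` and `c₁ = ab` splits by `mul_zpow`. Finally `D` is
additive in `k̄₁`, because `k̄₁` enters each `Δᵢⱼ` through exactly one column (as `k̄₁ k̄ⱼ` when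
`i = 1`, as a plain column otherwise), so the sign `(-1)^D` is multiplicative. -/

open Function Matrix

lemma omitTwo_ne_left {n : ℕ} (i j : Fin (n + 1)) (t : Fin (n - 1)) : omitTwo i j t ≠ i := by
  unfold omitTwo
  split_ifs <;> simp only [ne_eq, Fin.ext_iff] <;> omega

lemma omitTwo_eq_zero_iff {n : ℕ} {i : Fin (n + 1)} (hi : i ≠ 0) (j : Fin (n + 1))
    (t : Fin (n - 1)) : omitTwo i j t = 0 ↔ (t : ℕ) = 0 := by
  rw [← Fin.val_ne_iff, Fin.val_zero] at hi
  unfold omitTwo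
  split_ifs <;> simp only [Fin.ext_iff, Fin.val_zero] <;> omega

def deltaCols (n : ℕ) (w : Fin (n + 1) → Fin n → ZMod 2) (i j : Fin (n + 1)) :
    Fin n → Fin n → ZMod 2 :=
  fun c => if h : (c : ℕ) < n - 1 then w (omitTwo i j ⟨c, h⟩) else w i * w j

lemma DeltaIJ_eq_det_deltaCols (n : ℕ) (w : Fin (n + 1) → Fin n → ZMod 2) (i j : Fin (n + 1)) :
    DeltaIJ n w i j = det (of (deltaCols n w i j)) := by
  rw [← det_transpose, DeltaIJ]
  congr 1
  ext r c
  simp only [deltaCols, transpose_apply, of_apply]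
  split_ifs <;> rfl

lemma deltaCols_update_zero_left {n : ℕ} (w : Fin (n + 1) → Fin n → ZMod 2) {j : Fin (n + 1)}
    (hj : j ≠ 0) (x : Fin n → ZMod 2) {c₀ : Fin n} (hc₀ : (c₀ : ℕ) = n - 1) :
    deltaCols n (update w 0 x) 0 j = update (deltaCols n w 0 j) c₀ (x * w j) := by
  funext c
  rcases eq_or_ne c c₀ with rfl | hc
  · simp only [deltaCols, hc₀, lt_irrefl, dite_false, update_self, update_of_ne hj]
  · have hlt : (c : ℕ) < n - 1 := by
      have := c.isLt; have := Fin.val_ne_iff.mpr hc; omega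
    simp only [deltaCols, hlt, dite_true, update_of_ne hc, update_of_ne (omitTwo_ne_left _ _ _)]

lemma deltaCols_update_zero_of_ne {n : ℕ} (w : Fin (n + 1) → Fin n → ZMod 2) {i j : Fin (n + 1)}
    (hi : i ≠ 0) (hij : i < j) (x : Fin n → ZMod 2) {c₀ : Fin n} (hc₀ : (c₀ : ℕ) = 0) :
    deltaCols n (update w 0 x) i j = update (deltaCols n w i j) c₀ x := by
  have hj : j ≠ 0 := Fin.ne_zero_of_lt hij
  funext c
  rcases eq_or_ne c c₀ with rfl | hc
  · have hlt : (c : ℕ) < n - 1 := by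
      have := Fin.val_ne_iff.mpr hi; rw [Fin.lt_def] at hij; have := j.isLt; omega
    simp only [deltaCols, hlt, dite_true, update_self,
      (omitTwo_eq_zero_iff hi j ⟨c, hlt⟩).mpr hc₀]
  · have hc' : (c : ℕ) ≠ 0 := hc₀ ▸ Fin.val_ne_iff.mpr hc
    rw [update_of_ne hc]
    unfold deltaCols
    split_ifs with hlt
    · exact update_of_ne ((omitTwo_eq_zero_iff hi j ⟨c, hlt⟩).not.mpr hc') _ _
    · rw [update_of_ne hi, update_of_ne hj]

lemma DeltaIJ_update_zero_add {n : ℕ} (w : Fin (n + 1) → Fin n → ZMod 2) (u v : Fin n → ZMod 2)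
    {i j : Fin (n + 1)} (hij : i < j) :
    DeltaIJ n (update w 0 (u + v)) i j =
      DeltaIJ n (update w 0 u) i j + DeltaIJ n (update w 0 v) i j := by
  have hj : j ≠ 0 := Fin.ne_zero_of_lt hij
  have hn : 0 < n := by have := Fin.val_ne_iff.mpr hj; have := j.isLt; omega
  simp only [DeltaIJ_eq_det_deltaCols]
  rcases eq_or_ne i 0 with rfl | hi
  · have hc₀ : ((⟨n - 1, by omega⟩ : Fin n) : ℕ) = n - 1 := rfl
    simp only [deltaCols_update_zero_left w hj _ hc₀, add_mul]
    exact det_updateRow_add _ _ _ _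
  · have hc₀ : ((⟨0, hn⟩ : Fin n) : ℕ) = 0 := rfl
    simp only [deltaCols_update_zero_of_ne w hi hij _ hc₀]
    exact det_updateRow_add _ _ _ _

lemma D₂_update_zero_add {n : ℕ} (w : Fin (n + 1) → Fin n → ZMod 2) (u v : Fin n → ZMod 2) :
    D₂ n (update w 0 (u + v)) = D₂ n (update w 0 u) + D₂ n (update w 0 v) := by
  rw [D₂, D₂, D₂, ← Finset.sum_add_distrib]
  refine Finset.sum_congr rfl fun p hp => ?_
  exact DeltaIJ_update_zero_add w u v (Finset.mem_filter.mp hp).2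

def signZMod2 (x : ZMod 2) : ℂ := if x = 0 then 1 else -1

lemma signZMod2_add (x y : ZMod 2) : signZMod2 (x + y) = signZMod2 x * signZMod2 y := by
  obtain rfl | rfl : x = 0 ∨ x = 1 := by decide +revert
  all_goals obtain rfl | rfl : y = 0 ∨ y = 1 := by decide +revert
  all_goals simp [signZMod2, show (1 + 1 : ZMod 2) = 0 from rfl]

lemma signZMod2_D₂_update_zero_add {n : ℕ} (k : Fin (n + 1) → Fin n → ℤ) (x y : Fin n → ℤ) :
    signZMod2 (D₂ n fun t r => ((update k 0 (x + y) t r : ℤ) : ZMod 2)) =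
      signZMod2 (D₂ n fun t r => ((update k 0 x t r : ℤ) : ZMod 2)) *
        signZMod2 (D₂ n fun t r => ((update k 0 y t r : ℤ) : ZMod 2)) := by
  have hcast : ∀ z : Fin n → ℤ, (fun t r => ((update k 0 z t r : ℤ) : ZMod 2)) =
      update (fun t r => (k t r : ZMod 2)) 0 (fun r => (z r : ZMod 2)) := fun z =>
    comp_update (fun v r => (v r : ZMod 2)) k 0 z
  have hadd : (fun r => (((x + y) r : ℤ) : ZMod 2)) =
      (fun r => (x r : ZMod 2)) + fun r => (y r : ZMod 2) := by
    funext r; simp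
  rw [hcast, hcast, hcast, hadd, D₂_update_zero_add, signZMod2_add]

def parshinExponent (n : ℕ) (k : Fin (n + 1) → Fin n → ℤ) (i : Fin (n + 1)) : ℤ :=
  (-1) ^ ((i : ℕ) + 1) * det (of (k ∘ i.succAbove))

lemma parshinSymbol_eq (n : ℕ) (c : Fin (n + 1) → ℂ) (k : Fin (n + 1) → Fin n → ℤ) :
    parshinSymbol n c k =
      signZMod2 (D₂ n fun t r => ((k t r : ℤ) : ZMod 2)) * ∏ i, c i ^ parshinExponent n k i := by
  simp only [parshinSymbol, parshinExponent, signZMod2, ← det_transpose (of (k ∘ _))]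
  rfl

lemma parshinExponent_update_zero_self {n : ℕ} (k : Fin (n + 1) → Fin n → ℤ) (x : Fin n → ℤ) :
    parshinExponent n (update k 0 x) 0 = parshinExponent n k 0 := by
  rw [parshinExponent, parshinExponent,
    update_comp_eq_of_notMem_range _ _ (by simp)]

lemma parshinExponent_update_zero_add {n : ℕ} (k : Fin (n + 1) → Fin n → ℤ) (x y : Fin n → ℤ)
    {i : Fin (n + 1)} (hi : i ≠ 0) :
    parshinExponent n (update k 0 (x + y)) i =
      parshinExponent n (update k 0 x) i + parshinExponent n (update k 0 y) i := by
  obtain ⟨j, hj⟩ := Fin.exists_succAbove_eq hi.symm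
  simp only [parshinExponent, ← mul_add, ← hj,
    update_comp_eq_of_injective _ (Fin.succAbove_right_injective)]
  exact congrArg _ (det_updateRow_add _ _ _ _)

theorem stmt12_general (n : ℕ) (c : Fin (n + 1) → ℂ) (hc : ∀ i, c i ≠ 0)
    (k : Fin (n + 1) → Fin n → ℤ)
    (a b : ℂ) (l m : Fin n → ℤ)
    (hc₁ : c 0 = a * b) (hk₁ : k 0 = l + m) :
    parshinSymbol n c k =
      parshinSymbol n (Function.update c 0 a) (Function.update k 0 l) *
        parshinSymbol n (Function.update c 0 b) (Function.update k 0 m) := by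
  have hk : k = update k 0 (l + m) := by rw [← hk₁, update_eq_self]
  conv_lhs => rw [hk]
  rw [parshinSymbol_eq, parshinSymbol_eq, parshinSymbol_eq, signZMod2_D₂_update_zero_add,
    mul_mul_mul_comm, ← Finset.prod_mul_distrib]
  refine congrArg _ (Finset.prod_congr rfl fun i _ => ?_)
  rcases eq_or_ne i 0 with rfl | hi
  · simp only [update_self, hc₁, parshinExponent_update_zero_self, mul_zpow]
  · rw [update_of_ne hi, update_of_ne hi, parshinExponent_update_zero_add k l m hi,
      zpow_add₀ (hc i)]

/-- The Parshin symbol of monomials is multiplicative in each argument: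
if `c₁ = a·b` and `k₁ = l + m`, then
`[c₁ z^{k₁}, c₂ z^{k₂}, …] = [a z^l, c₂ z^{k₂}, …] · [b z^m, c₂ z^{k₂}, …]`. -/
theorem stmt12 (n : ℕ) (hn : 1 ≤ n) (c : Fin (n + 1) → ℂ) (hc : ∀ i, c i ≠ 0)
    (k : Fin (n + 1) → Fin n → ℤ)
    (a b : ℂ) (ha : a ≠ 0) (hb : b ≠ 0) (l m : Fin n → ℤ)
    (hc₁ : c 0 = a * b) (hk₁ : k 0 = l + m) :
    parshinSymbol n c k =
      parshinSymbol n (Function.update c 0 a) (Function.update k 0 l) *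
        parshinSymbol n (Function.update c 0 b) (Function.update k 0 m) :=
  stmt12_general n c hc k a b l m hc₁ hk₁
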